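/- Combined safe and live vertical refinement is transitive: given transition systems A, C, D with admissible trace sets 𝐀 ⊆ Tr(A), 𝐂 ⊆ Tr(C), 𝐃 ⊆ Tr(D), and maps F : C → A and G : D → C, if (A,𝐀) ⊑_F (C,𝐂) and (C,𝐂) ⊑_G (D,𝐃), where ⊑ denotes the conjunction of safe vertical refinement and live vertical refinement, then (A,𝐀) ⊑_{F∘G} (D,𝐃). -/

import Mathlib

/-- A (finite) trace of a transition system with reaction relation `r` is a
nonempty list whose consecutive elements are related by `r`. -/
def IsTrace {A : Type*} (r : A → A → Prop) (t : List A) : Prop :=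
  t ≠ [] ∧ t.Chain' r

/-- `Tr(A)`: the set of all traces of the transition system `(A, r)`. -/
def Traces {A : Type*} (r : A → A → Prop) : Set (List A) :=
  {t | IsTrace r t}

/-- Safe vertical refinement `A ⊑ˢᵃᶠᵉ_F C`: the pointwise `F`-image of every
trace of `C` is a trace of `A`, i.e. `F(Tr(C)) ⊆ Tr(A)`. -/
def SafeRef {C A : Type*} (rC : C → C → Prop) (rA : A → A → Prop) (F : C → A) : Prop :=
  (List.map F) '' Traces rC ⊆ Traces rA

/-- Live vertical refinement `(A,𝐀) ⊑ˡⁱᵛᵉ_F (C,𝐂)`: for every trace `s` of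
`C`, whenever `F(s)` has an extension `t'` (a nonempty list such that the
composite `F(s);t'` is a trace) with the composite `F(s);t'` admissible
(in `𝐀`), then `s` has an extension `s'` whose composite `s;s'` is an
admissible trace (in `𝐂`) and `F(s') = t'`. -/
def LiveRef {C A : Type*} (rC : C → C → Prop) (rA : A → A → Prop) (F : C → A)
    (AdmA : Set (List A)) (AdmC : Set (List C)) : Prop :=
  ∀ s ∈ Traces rC, ∀ t' : List A,
    t' ≠ [] → IsTrace rA (s.map F ++ t') → (s.map F ++ t') ∈ AdmA →
    ∃ s' : List C, s' ≠ [] ∧ IsTrace rC (s ++ s') ∧ (s ++ s') ∈ AdmC ∧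
      s'.map F = t'

/-- Combined safe and live vertical refinement
`(A,𝐀) ⊑_F (C,𝐂)`: the conjunction of safe and live vertical refinement. -/
def SafeLiveRef {C A : Type*} (rC : C → C → Prop) (rA : A → A → Prop) (F : C → A)
    (AdmA : Set (List A)) (AdmC : Set (List C)) : Prop :=
  SafeRef rC rA F ∧ LiveRef rC rA F AdmA AdmC

theorem SafeRef.map_mem_traces {C A : Type*} {rC : C → C → Prop} {rA : A → A → Prop}
    {F : C → A} (hF : SafeRef rC rA F) {s : List C} (hs : s ∈ Traces rC) :
    s.map F ∈ Traces rA :=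
  hF ⟨s, hs, rfl⟩

section Comp

variable {A C D : Type*} {rA : A → A → Prop} {rC : C → C → Prop} {rD : D → D → Prop}
  {F : C → A} {G : D → C} {AdmA : Set (List A)} {AdmC : Set (List C)} {AdmD : Set (List D)}

theorem SafeRef.comp (hF : SafeRef rC rA F) (hG : SafeRef rD rC G) :
    SafeRef rD rA (F ∘ G) := by
  rintro _ ⟨s, hs, rfl⟩
  rw [← List.map_map]
  exact hF.map_mem_traces (hG.map_mem_traces hs)

/-- Safety of `G` is needed to make `G(s)` a trace of `C`, so that liveness of `F` applies. -/
theorem LiveRef.comp (hF : LiveRef rC rA F AdmA AdmC) (hGsafe : SafeRef rD rC G)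
    (hG : LiveRef rD rC G AdmC AdmD) : LiveRef rD rA (F ∘ G) AdmA AdmD := by
  intro s hs t' ht' htr hadm
  rw [← List.map_map] at htr hadm
  obtain ⟨u', hu', hsu'_tr, hsu'_adm, rfl⟩ :=
    hF (s.map G) (hGsafe.map_mem_traces hs) t' ht' htr hadm
  obtain ⟨s', hs', hss'_tr, hss'_adm, rfl⟩ := hG s hs u' hu' hsu'_tr hsu'_adm
  exact ⟨s', hs', hss'_tr, hss'_adm, List.map_map.symm⟩

theorem SafeLiveRef.comp (hF : SafeLiveRef rC rA F AdmA AdmC)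
    (hG : SafeLiveRef rD rC G AdmC AdmD) : SafeLiveRef rD rA (F ∘ G) AdmA AdmD :=
  ⟨hF.1.comp hG.1, hF.2.comp hG.1 hG.2⟩

end Comp

theorem safeLiveRef_trans_general {A C D : Type*}
    (rA : A → A → Prop) (rC : C → C → Prop) (rD : D → D → Prop)
    (F : C → A) (G : D → C)
    (AdmA : Set (List A)) (AdmC : Set (List C)) (AdmD : Set (List D))
    (hFC : SafeLiveRef rC rA F AdmA AdmC) (hGD : SafeLiveRef rD rC G AdmC AdmD) :
    SafeLiveRef rD rA (F ∘ G) AdmA AdmD :=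
  hFC.comp hGD

/-- Combined safe and live vertical refinement is transitive. -/
theorem safeLiveRef_trans {A C D : Type*}
    (rA : A → A → Prop) (rC : C → C → Prop) (rD : D → D → Prop)
    (F : C → A) (G : D → C)
    (AdmA : Set (List A)) (AdmC : Set (List C)) (AdmD : Set (List D))
    (hA : AdmA ⊆ Traces rA) (hC : AdmC ⊆ Traces rC) (hD : AdmD ⊆ Traces rD)
    (hFC : SafeLiveRef rC rA F AdmA AdmC) (hGD : SafeLiveRef rD rC G AdmC AdmD) :
    SafeLiveRef rD rA (F ∘ G) AdmA AdmD :=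
  safeLiveRef_trans_general rA rC rD F G AdmA AdmC AdmD hFC hGD
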